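/- In the execution of Algorithm lineon on any request sequence R, for every base replica (v,t) ∈ Base and every integer ρ > 0 with t+ρ ≤ t_N, there exists a replica (w,t+ρ) ∈ C_{t+ρ} such that |v−w| ≤ 4Δρ. -/

import Mathlib

open Finset

/-! ## The time-line grid of a line network -/

/-- Grid edges of the time-line graph of the line network:
`h v t` is the undirected horizontal edge `{(v,t),(v+1,t)}`,
`a v t` is the arc `((v,t),(v,t+1))` directed forward in time. -/
inductive GEdge : Type
  | h (v t : ℕ) : GEdge
  | a (v t : ℕ) : GEdge
deriving DecidableEq

/-- Distance between two nodes of the line network. -/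
def natdist (a b : ℕ) : ℕ := max a b - min a b

/-- The (replica) endpoints of a grid edge. -/
def eVerts : GEdge → Finset (ℕ × ℕ)
  | .h v t => {(v, t), (v + 1, t)}
  | .a v t => {(v, t), (v, t + 1)}

/-- The replicas that are endpoints of edges of `F`. -/
def verts (F : Finset GEdge) : Finset (ℕ × ℕ) := F.biUnion eVerts

/-- The edge lies inside the grid of the line network `L(n)` (nodes `1,…,n`). -/
def eInGrid (n : ℕ) : GEdge → Prop
  | .h v _ => 1 ≤ v ∧ v + 1 ≤ n
  | .a v _ => 1 ≤ v ∧ v ≤ n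

/-- The distance `d((u,s),(v,t)) = (t-s) + |v-u|` if `s ≤ t`, and `∞` otherwise. -/
def gdist (p q : ℕ × ℕ) : WithTop ℕ :=
  if p.2 ≤ q.2 then ((q.2 - p.2 + natdist p.1 q.1 : ℕ) : WithTop ℕ) else ⊤

/-- One step of a path in a solution: horizontal edges may be traversed in both
directions, arcs only forward in time. -/
inductive GStep (F : Finset GEdge) : ℕ × ℕ → ℕ × ℕ → Prop
  | right {v t : ℕ} : GEdge.h v t ∈ F → GStep F (v, t) (v + 1, t)
  | left {v t : ℕ} : GEdge.h v t ∈ F → GStep F (v + 1, t) (v, t)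
  | up {v t : ℕ} : GEdge.a v t ∈ F → GStep F (v, t) (v, t + 1)

/-- `q` is reachable from `p` in the edge set `F`. -/
def Reaches (F : Finset GEdge) (p q : ℕ × ℕ) : Prop := Relation.ReflTransGen (GStep F) p q

/-- A feasible MCD solution: a set of grid edges spanning all requests from the
origin replica `(r0, 0)`. -/
def Feasible (n r0 : ℕ) (R : List (ℕ × ℕ)) (F : Finset GEdge) : Prop :=
  (∀ e ∈ F, eInGrid n e) ∧ ∀ r ∈ R, Reaches F (r0, 0) r

/-- `|OPT|`, the cost of a minimum-cost feasible solution. -/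
noncomputable def optCost (n r0 : ℕ) (R : List (ℕ × ℕ)) : ℕ :=
  sInf {c : ℕ | ∃ F : Finset GEdge, Feasible n r0 R F ∧ F.card = c}

/-- A valid MCD instance on `L(n)`: the origin and all requested nodes are in
`{1,…,n}` and the request times are nondecreasing. -/
def ValidInstance (n r0 : ℕ) (R : List (ℕ × ℕ)) : Prop :=
  1 ≤ r0 ∧ r0 ≤ n ∧ (∀ r ∈ R, 1 ≤ r.1 ∧ r.1 ≤ n) ∧ List.Chain' (· ≤ ·) (R.map Prod.snd)

/-- The time `t_N` of the last request. -/
def lastT (R : List (ℕ × ℕ)) : ℕ := (R.map Prod.snd).foldr max 0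

/-! ## The offline algorithm Triangle of Charikar, Halperin and Motwani -/

/-- The `i`-th request (junk value `(0,0)` out of range). -/
def req (R : List (ℕ × ℕ)) (i : ℕ) : ℕ × ℕ := R.getD i (0, 0)

/-- The radius `ρ^T_i = d(q_i, r_i)` of the `i`-th request, where `q_i = serve i`
is its serving replica. -/
def triRho (R : List (ℕ × ℕ)) (serve : ℕ → ℕ × ℕ) (i : ℕ) : ℕ :=
  ((req R i).2 - (serve i).2) + natdist (serve i).1 (req R i).1

/-- `Base(i)`: the replicas `(v, t_i)` with `|v - v_i| ≤ ρ^T_i`. -/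
def triBase (n : ℕ) (R : List (ℕ × ℕ)) (serve : ℕ → ℕ × ℕ) (i : ℕ) : Finset (ℕ × ℕ) :=
  ((Finset.Icc 1 n).filter fun v => natdist v (req R i).1 ≤ triRho R serve i).image
    fun v => (v, (req R i).2)

/-- `Base_H(i)`: the horizontal edges joining consecutive replicas of `Base(i)`. -/
def triBaseH (n : ℕ) (R : List (ℕ × ℕ)) (serve : ℕ → ℕ × ℕ) (i : ℕ) : Finset GEdge :=
  ((Finset.Icc 1 n).filter fun v =>
      v + 1 ≤ n ∧ natdist v (req R i).1 ≤ triRho R serve i ∧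
        natdist (v + 1) (req R i).1 ≤ triRho R serve i).image
    fun v => GEdge.h v (req R i).2

/-- The arcs of the vertical path from the serving replica `(u_i, s_i)` to `(u_i, t_i)`
added at step (T3). -/
def triAddA (R : List (ℕ × ℕ)) (serve : ℕ → ℕ × ℕ) (i : ℕ) : Finset GEdge :=
  (Finset.Ico (serve i).2 (req R i).2).image fun τ => GEdge.a (serve i).1 τ

/-- Triangle's solution after handling the first `i` requests. -/
def triSol (R : List (ℕ × ℕ)) (serve : ℕ → ℕ × ℕ) (addH : ℕ → Finset GEdge)
    (i : ℕ) : Finset GEdge :=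
  (Finset.range i).biUnion fun j => triAddA R serve j ∪ addH j

/-- The replicas of Triangle's solution after handling the first `i` requests
(initially only the origin replica `(r0,0)`). -/
def triReps (r0 : ℕ) (R : List (ℕ × ℕ)) (serve : ℕ → ℕ × ℕ) (addH : ℕ → Finset GEdge)
    (i : ℕ) : Finset (ℕ × ℕ) :=
  insert (r0, 0) (verts (triSol R serve addH i))

/-- An execution of Algorithm Triangle on the instance `(n, r0, R)`:
`serve i` is the serving replica `q_i = (u_i, s_i)` of request `r_i` (step (T1)),
chosen in the current solution at minimum distance from `r_i`;
`addH i` is the set of horizontal edges added at step (T4), namely all of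
`Base_H(i)` except possibly one edge (the one closing a cycle). -/
structure TriangleExec (n r0 : ℕ) (R : List (ℕ × ℕ)) where
  serve : ℕ → ℕ × ℕ
  addH : ℕ → Finset GEdge
  serve_mem : ∀ i < R.length, serve i ∈ triReps r0 R serve addH i
  serve_time : ∀ i < R.length, (serve i).2 ≤ (req R i).2
  serve_min : ∀ i < R.length, ∀ q ∈ triReps r0 R serve addH i,
      gdist (serve i) (req R i) ≤ gdist q (req R i)
  addH_spec : ∀ i < R.length, ∃ E : Finset GEdge,
      E.card ≤ 1 ∧ addH i = triBaseH n R serve i \ E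
  base_conn : ∀ i < R.length, ∀ p ∈ triBase n R serve i,
      Reaches (triSol R serve addH (i + 1)) (r0, 0) p
  addH_tail : ∀ i, R.length ≤ i → addH i = ∅

/-- `H^T`: the horizontal edges of Triangle's final solution. -/
def triHT (R : List (ℕ × ℕ)) (addH : ℕ → Finset GEdge) : Finset GEdge :=
  (Finset.range R.length).biUnion addH

/-- `A^T`: the arcs of Triangle's final solution. -/
def triAT (R : List (ℕ × ℕ)) (serve : ℕ → ℕ × ℕ) : Finset GEdge :=
  (Finset.range R.length).biUnion (triAddA R serve)

/-- `Base = ∪ᵢ Base(i)`: all base replicas. -/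
def triBaseAll (n : ℕ) (R : List (ℕ × ℕ)) (serve : ℕ → ℕ × ℕ) : Finset (ℕ × ℕ) :=
  (Finset.range R.length).biUnion (triBase n R serve)

/-! ## Algorithm lineon -/

/-- An interval of the hierarchical partition, encoded as `(level, index)`:
`(l, j)` denotes `I^l_j = {Δ(j-1)·2^l + 1, …, Δ·j·2^l}`. -/
abbrev Ivl := ℕ × ℕ

/-- The nodes of the interval `I = (l, j)`. -/
def ivlNodes (Δ : ℕ) (I : Ivl) : Finset ℕ :=
  Finset.Icc (Δ * (I.2 - 1) * 2 ^ I.1 + 1) (Δ * I.2 * 2 ^ I.1)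

/-- `I = (l, j)` is a genuine interval of the partition of `{1,…,n}`,
where `n = Δ · 2^k`: its level is at most `log₂ m = k` and
`1 ≤ j ≤ m / 2^l = 2^(k-l)`. -/
def validIvl (Δ k : ℕ) (I : Ivl) : Prop :=
  I.1 ≤ k ∧ 1 ≤ I.2 ∧ I.2 ≤ 2 ^ (k - I.1)

/-- The nodes of the neighborhood `N(I) = NL(I) ∪ I ∪ NR(I)` of interval `I`. -/
def nbhdNodes (n Δ : ℕ) (I : Ivl) : Finset ℕ :=
  Finset.Icc (Δ * (I.2 - 2) * 2 ^ I.1 + 1) (min n (Δ * (I.2 + 1) * 2 ^ I.1))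

/-- The nodes having a base replica at time `t` (`Base[t]`, as nodes). -/
def baseNodesAt (n : ℕ) (R : List (ℕ × ℕ)) (serve : ℕ → ℕ × ℕ) (t : ℕ) : Finset ℕ :=
  ((triBaseAll n R serve).filter fun p => p.2 = t).image Prod.fst

/-- `I` is active at time `t`: `Base ∩ I[t - 2^{l(I)}, t] ≠ ∅`. -/
def activeAt (n Δ : ℕ) (R : List (ℕ × ℕ)) (serve : ℕ → ℕ × ℕ) (I : Ivl) (t : ℕ) : Prop :=
  ∃ p ∈ triBaseAll n R serve, p.1 ∈ ivlNodes Δ I ∧ p.2 ≤ t ∧ t ≤ p.2 + 2 ^ I.1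

/-- `I` is stay-active at time `t`: `Base ∩ I[t - 2^{l(I)} + 1, t] ≠ ∅`. -/
def stayActiveAt (n Δ : ℕ) (R : List (ℕ × ℕ)) (serve : ℕ → ℕ × ℕ) (I : Ivl) (t : ℕ) : Prop :=
  ∃ p ∈ triBaseAll n R serve, p.1 ∈ ivlNodes Δ I ∧ p.2 ≤ t ∧ t < p.2 + 2 ^ I.1

/-- `C_t`: the nodes storing a copy at time `t`.  `C_0 = {r0}`, and `C_{t+1}`
consists of the origin together with the nodes selected (by `sel`) for the
commitments made at time `t` (listed, in processing order, in `commitList t`). -/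
def lineC (r0 : ℕ) (commitList : ℕ → List Ivl) (sel : ℕ → Ivl → ℕ) : ℕ → Finset ℕ
  | 0 => {r0}
  | t + 1 => insert r0 ((commitList t).map (sel t)).toFinset

/-- The nodes to which the delivery phase for request `r_j` delivers a copy:
the horizontal path from `q^on_j` to `r_j` together with the nodes of `Base(j)`. -/
def servedNodes (n : ℕ) (R : List (ℕ × ℕ)) (serve : ℕ → ℕ × ℕ) (qon : ℕ → ℕ)
    (j : ℕ) : Finset ℕ :=
  Finset.Icc (min (qon j) (req R j).1) (max (qon j) (req R j).1) ∪
    (triBase n R serve j).image Prod.fst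

/-- The nodes whose time-`t_i` replica is in lineon's solution when request `r_i`
arrives: the caches `C_{t_i}` together with everything delivered for earlier
requests of the same time. -/
def availNodes (n r0 : ℕ) (R : List (ℕ × ℕ)) (serve : ℕ → ℕ × ℕ)
    (commitList : ℕ → List Ivl) (sel : ℕ → Ivl → ℕ) (qon : ℕ → ℕ) (i : ℕ) : Finset ℕ :=
  lineC r0 commitList sel (req R i).2 ∪
    (Finset.range i).biUnion fun j =>
      if (req R j).2 = (req R i).2 then servedNodes n R serve qon j else ∅

/-- An execution of Algorithm lineon with parameter `Δ` (where `n = Δ · 2^k`) on the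
instance `(n, r0, R)`.  It simulates Triangle (`tri`); `commitList t` is the list of
intervals committing at time `t`, in the order processed by the storage phase
(levels in increasing order); `sel t I` is the node selected for the commitment
`⟨I,t⟩` in step (S1.2); `qon i` is the node of the serving replica `q^on_i` of
request `r_i` chosen in the delivery phase (step (D1)). -/
structure LineonExec (n Δ k r0 : ℕ) (R : List (ℕ × ℕ)) where
  tri : TriangleExec n r0 R
  hn : n = Δ * 2 ^ k
  commitList : ℕ → List Ivl
  sel : ℕ → Ivl → ℕ
  qon : ℕ → ℕ
  commit_valid : ∀ t, ∀ I ∈ commitList t, validIvl Δ k I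
  commit_nodup : ∀ t, (commitList t).Nodup
  commit_sorted : ∀ t, ((commitList t).map Prod.fst).Pairwise (· ≤ ·)
  commit_stay : ∀ t, ∀ I ∈ commitList t, stayActiveAt n Δ R tri.serve I t
  commit_fresh : ∀ t l₁ I l₂, commitList t = l₁ ++ I :: l₂ →
      ∀ v ∈ nbhdNodes n Δ I, v ≠ r0 ∧ v ∉ l₁.map (sel t)
  commit_tail : ∀ t, lastT R < t → commitList t = []
  sel_nbhd : ∀ t, ∀ I ∈ commitList t, sel t I ∈ nbhdNodes n Δ I
  sel_src : ∀ t, ∀ I ∈ commitList t,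
      sel t I ∈ baseNodesAt n R tri.serve t ∨ sel t I ∈ lineC r0 commitList sel t
  loop_done : ∀ t ≤ lastT R, ∀ I, validIvl Δ k I → stayActiveAt n Δ R tri.serve I t →
      ∃ v ∈ nbhdNodes n Δ I, v ∈ lineC r0 commitList sel (t + 1)
  qon_mem : ∀ i < R.length, qon i ∈ availNodes n r0 R tri.serve commitList sel qon i
  qon_min : ∀ i < R.length, ∀ w ∈ availNodes n r0 R tri.serve commitList sel qon i,
      natdist (qon i) (req R i).1 ≤ natdist w (req R i).1

/-- The online radius `ρ^on_i = d(q^on_i, r_i)`. -/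
def lineRon (R : List (ℕ × ℕ)) (qon : ℕ → ℕ) (i : ℕ) : ℕ := natdist (qon i) (req R i).1

/-- `H^on`: the horizontal edges of lineon's final solution. -/
def lineHon (n : ℕ) (R : List (ℕ × ℕ)) (serve : ℕ → ℕ × ℕ) (qon : ℕ → ℕ) : Finset GEdge :=
  (Finset.range R.length).biUnion fun i =>
    (Finset.Ico (min (qon i) (req R i).1) (max (qon i) (req R i).1)).image
        (fun v => GEdge.h v (req R i).2) ∪
      triBaseH n R serve i

/-- `A^on`: the arcs of lineon's final solution, i.e. the arcs `((v,t),(v,t+1))`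
with `(v,t+1) ∈ C_{t+1}`. -/
def lineAon (r0 : ℕ) (R : List (ℕ × ℕ)) (commitList : ℕ → List Ivl)
    (sel : ℕ → Ivl → ℕ) : Finset GEdge :=
  (Finset.range (lastT R)).biUnion fun t =>
    (lineC r0 commitList sel (t + 1)).image fun v => GEdge.a v t

/-- `COMMIT`, as a finite set of pairs `⟨I, t⟩`. -/
def commitSet (R : List (ℕ × ℕ)) (commitList : ℕ → List Ivl) : Finset (Ivl × ℕ) :=
  (Finset.range (lastT R + 1)).biUnion fun t =>
    (commitList t).toFinset.image fun I => (I, t)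

/-- For every base replica `(v,t) ∈ Base` and every integer
`ρ > 0` with `t + ρ ≤ t_N`, there exists a replica `(w, t+ρ) ∈ C_{t+ρ}` such that
`|v - w| ≤ 4Δρ`. -/
theorem lineon_copy_near_base (n Δ k r0 : ℕ) (R : List (ℕ × ℕ))
    (hV : ValidInstance n r0 R) (hΔ : 1 ≤ Δ) (e : LineonExec n Δ k r0 R)
    (v t ρ : ℕ) (hb : (v, t) ∈ triBaseAll n R e.tri.serve) (hρ : 0 < ρ)
    (ht : t + ρ ≤ lastT R) :
    ∃ w ∈ lineC r0 e.commitList e.sel (t + ρ), natdist v w ≤ 4 * Δ * ρ := by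
  classical
  -- v is a node of the line network
  have hv : 1 ≤ v ∧ v ≤ n := by
    obtain ⟨i, hi, hvi⟩ := Finset.mem_biUnion.mp hb
    simp only [triBase, Finset.mem_image, Finset.mem_filter, Finset.mem_Icc] at hvi
    obtain ⟨v', ⟨⟨h1, h2⟩, -⟩, heq⟩ := hvi
    obtain ⟨rfl, -⟩ := Prod.mk.injEq _ _ _ _ ▸ heq
    exact ⟨h1, h2⟩
  obtain ⟨hr01, hr0n, -, -⟩ := hV
  have hn : n = Δ * 2 ^ k := e.hn
  by_cases hρk : ρ ≤ 2 ^ k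
  · -- choose the smallest level l with ρ ≤ 2^l
    set l := Nat.clog 2 ρ with hldef
    have hl1 : ρ ≤ 2 ^ l := Nat.le_pow_clog one_lt_two ρ
    have hlk : l ≤ k := (Nat.clog_le_iff_le_pow one_lt_two).mpr hρk
    have hl2 : 2 ^ l ≤ 2 * ρ := by
      rcases eq_or_lt_of_le (show 1 ≤ ρ from hρ) with h1 | h1
      · simp [hldef, ← h1]
      · have h2 := Nat.pow_pred_clog_lt_self one_lt_two h1
        rcases Nat.eq_zero_or_pos l with h0 | h0
        · rw [h0]; omega
        · have : l = (l - 1) + 1 := by omega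
          rw [this, pow_succ]
          rw [Nat.pred_eq_sub_one, ← hldef] at h2
          omega
    have hD : 0 < Δ * 2 ^ l := by positivity
    -- the level-l interval containing v
    obtain ⟨q, hq1, hq2, hqk⟩ :
        ∃ q, Δ * q * 2 ^ l + 1 ≤ v ∧ v ≤ Δ * (q + 1) * 2 ^ l ∧ q + 1 ≤ 2 ^ (k - l) := by
      refine ⟨(v - 1) / (Δ * 2 ^ l), ?_, ?_, ?_⟩
      · have h := Nat.div_mul_le_self (v - 1) (Δ * 2 ^ l)
        have e1 : Δ * ((v - 1) / (Δ * 2 ^ l)) * 2 ^ l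
            = (v - 1) / (Δ * 2 ^ l) * (Δ * 2 ^ l) := by ring
        omega
      · have h1 := Nat.div_add_mod (v - 1) (Δ * 2 ^ l)
        have h2 := Nat.mod_lt (v - 1) hD
        have e1 : Δ * ((v - 1) / (Δ * 2 ^ l) + 1) * 2 ^ l
            = Δ * 2 ^ l * ((v - 1) / (Δ * 2 ^ l)) + Δ * 2 ^ l := by ring
        omega
      · have h1 : v - 1 < 2 ^ (k - l) * (Δ * 2 ^ l) := by
        
          have e1 : 2 ^ (k - l) * (Δ * 2 ^ l) = Δ * (2 ^ (k - l) * 2 ^ l) := by ring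
          rw [e1, ← pow_add, Nat.sub_add_cancel hlk, ← hn]
          omega
        have := (Nat.div_lt_iff_lt_mul hD).mpr h1
        omega
    have hvalid : validIvl Δ k (l, q + 1) := ⟨hlk, by omega, hqk⟩
    have hstay : stayActiveAt n Δ R e.tri.serve (l, q + 1) (t + ρ - 1) := by
      refine ⟨(v, t), hb, ?_, by omega, by simp; omega⟩
      simp only [ivlNodes, Finset.mem_Icc, Nat.add_sub_cancel]
      exact ⟨hq1, hq2⟩
    obtain ⟨w, hw1, hw2⟩ := e.loop_done (t + ρ - 1) (by omega) (l, q + 1) hvalid hstay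
    have hts : t + ρ - 1 + 1 = t + ρ := by omega
    rw [hts] at hw2
    refine ⟨w, hw2, ?_⟩
    simp only [nbhdNodes, Finset.mem_Icc, le_min_iff] at hw1
    obtain ⟨hw3, -, hw4⟩ := hw1
    have hsub : q + 1 - 2 = q - 1 := by omega
    rw [hsub] at hw3
    have E2 : Δ * (q + 1 + 1) * 2 ^ l = Δ * q * 2 ^ l + 2 * (Δ * 2 ^ l) := by ring
    have E1 : Δ * (q + 1) * 2 ^ l = Δ * q * 2 ^ l + Δ * 2 ^ l := by ring
    have E3 : Δ * q * 2 ^ l ≤ Δ * (q - 1) * 2 ^ l + Δ * 2 ^ l := by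
      have h1 : q ≤ q - 1 + 1 := by omega
      calc Δ * q * 2 ^ l ≤ Δ * (q - 1 + 1) * 2 ^ l := by
            exact Nat.mul_le_mul_right _ (Nat.mul_le_mul_left _ h1)
        _ = Δ * (q - 1) * 2 ^ l + Δ * 2 ^ l := by ring
    have hbound : natdist v w ≤ 2 * (Δ * 2 ^ l) := by
      rcases le_total v w with h | h
      · rw [natdist, max_eq_right h, min_eq_left h]; omega
      · rw [natdist, max_eq_left h, min_eq_right h]; omega
    calc natdist v w ≤ 2 * (Δ * 2 ^ l) := hbound
      _ ≤ 2 * (Δ * (2 * ρ)) := by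
          exact Nat.mul_le_mul_left _ (Nat.mul_le_mul_left _ hl2)
      _ = 4 * Δ * ρ := by ring
  · -- ρ > 2^k : the origin suffices
    refine ⟨r0, ?_, ?_⟩
    · obtain ⟨s, hs⟩ : ∃ s, t + ρ = s + 1 := ⟨t + ρ - 1, by omega⟩
      rw [hs]
      simp [lineC]
    · have h1 : natdist v r0 ≤ n := by
        rcases le_total v r0 with h | h
        · rw [natdist, max_eq_right h, min_eq_left h]; omega
        · rw [natdist, max_eq_left h, min_eq_right h]; omega
      have h2 : Δ * 2 ^ k ≤ Δ * ρ := Nat.mul_le_mul_left _ (by omega)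
      have h3 : Δ * ρ ≤ 4 * Δ * ρ := Nat.mul_le_mul_right _ (by omega)
      omega
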